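/- Let Q₁ be the symmetric integer matrix ![![0,1,0],![1,0,0],![0,0,-2]] and let g₁ = ![![0,-1,0],![-1,0,0],![0,0,1]], g₂ = ![![1,0,0],![1,1,2],![1,0,1]], g₃ = -1 (minus the 3×3 identity matrix). Then each gᵢ satisfies gᵢᵀ · Q₁ · gᵢ = Q₁; moreover, with D = diag(2,2,4), each matrix D·gᵢ·D⁻¹ has integer entries and carries the subgroup Λ = 2ℤ × 2ℤ × 4ℤ of ℤ³ into itself, so induces an automorphism hᵢ of the finite abelian group A = ℤ³/Λ ≅ ℤ/2 × ℤ/2 × ℤ/4; and the subgroup of Aut(A) generated by h₁, h₂, h₃ is isomorphic to S₃ × ℤ/2ℤ (in particular it has order 12). -/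

import Mathlib

open Matrix

namespace Stmt0

/-- A Gram matrix (up to sign of the rank-one summand) of the lattice `H ⊕ ⟨2⟩`. -/
def Q : Matrix (Fin 3) (Fin 3) ℤ := !![0, 1, 0; 1, 0, 0; 0, 0, -2]

def g1 : Matrix (Fin 3) (Fin 3) ℤ := !![0, -1, 0; -1, 0, 0; 0, 0, 1]

def g2 : Matrix (Fin 3) (Fin 3) ℤ := !![1, 0, 0; 1, 1, 2; 1, 0, 1]

/-- `g₃` is minus the 3×3 identity matrix. -/
def g3 : Matrix (Fin 3) (Fin 3) ℤ := -1

/-- `D = diag(2, 2, 4)`. -/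
def D : Matrix (Fin 3) (Fin 3) ℤ := Matrix.diagonal ![2, 2, 4]

/-- The subgroup `Λ = 2ℤ × 2ℤ × 4ℤ` of `ℤ³`. -/
def Λ : AddSubgroup (Fin 3 → ℤ) :=
  AddSubgroup.pi Set.univ fun i => AddSubgroup.zmultiples (![(2 : ℤ), 2, 4] i)

/-- The finite abelian group `A = ℤ³/Λ`. -/
abbrev A : Type := (Fin 3 → ℤ) ⧸ Λ

/-! ### Auxiliary material -/

instance instGroupAddAut (X : Type*) [Add X] : Group (AddAut X) :=
  inferInstanceAs (Group (Multiplicative (AddAut X)))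

def M2m : Matrix (Fin 3) (Fin 3) ℤ := !![1, 0, 0; 1, 1, 1; 2, 0, 1]

abbrev Bt : Type := ZMod 2 × ZMod 2 × ZMod 4

def c42 (c : ZMod 4) : ZMod 2 := (c.val : ZMod 2)
def x24 (a : ZMod 2) : ZMod 4 := 2 * (a.val : ZMod 4)

lemma lemA (x : ℤ) : c42 (x : ZMod 4) = (x : ZMod 2) := by
  have h0 : x = 4 * (x / 4) + x % 4 := (Int.mul_ediv_add_emod x 4).symm
  have h1 : (0:ℤ) ≤ x % 4 := Int.emod_nonneg x (by norm_num)
  have h2 : x % 4 < 4 := Int.emod_lt_of_pos x (by norm_num)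
  set r := x % 4 with hr
  rw [h0]
  have e4 : ((4 * (x / 4) + r : ℤ) : ZMod 4) = (r : ZMod 4) := by
    push_cast
    rw [show ((4:ZMod 4)) = 0 by decide]
    ring
  have e2 : ((4 * (x / 4) + r : ℤ) : ZMod 2) = (r : ZMod 2) := by
    push_cast
    rw [show ((4:ZMod 2)) = 0 by decide]
    ring
  rw [e4, e2]
  interval_cases r <;> decide

lemma lemB (x : ℤ) : x24 (x : ZMod 2) = ((2 * x : ℤ) : ZMod 4) := by
  have h0 : x = 2 * (x / 2) + x % 2 := (Int.mul_ediv_add_emod x 2).symm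
  have h1 : (0:ℤ) ≤ x % 2 := Int.emod_nonneg x (by norm_num)
  have h2 : x % 2 < 2 := Int.emod_lt_of_pos x (by norm_num)
  set r := x % 2 with hr
  rw [h0]
  have e2 : ((2 * (x / 2) + r : ℤ) : ZMod 2) = (r : ZMod 2) := by
    push_cast
    rw [show ((2:ZMod 2)) = 0 by decide]
    ring
  have e4 : ((2 * (2 * (x / 2) + r) : ℤ) : ZMod 4) = ((2 * r : ℤ) : ZMod 4) := by
    push_cast
    have h : (2 : ZMod 4) * (2 * ((x/2 : ℤ) : ZMod 4) + (r : ZMod 4))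
        = 4 * ((x/2 : ℤ) : ZMod 4) + 2 * (r : ZMod 4) := by ring
    rw [h, show ((4:ZMod 4)) = 0 by decide]
    ring
  rw [e2, e4]
  interval_cases r <;> decide

lemma mem_Λ_iff (v : Fin 3 → ℤ) : v ∈ Λ ↔ (2 ∣ v 0 ∧ 2 ∣ v 1 ∧ 4 ∣ v 2) := by
  rw [show (v ∈ Λ) ↔ ∀ i ∈ Set.univ, v i ∈ AddSubgroup.zmultiples (![(2:ℤ), 2, 4] i) from
    Iff.rfl]
  simp only [Set.mem_univ, forall_true_left, Int.mem_zmultiples_iff]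
  constructor
  · rintro h
    exact ⟨by simpa using h 0, by simpa using h 1, by simpa using h 2⟩
  · rintro ⟨d1, d2, d3⟩ i
    fin_cases i <;> simpa using (by assumption)

def φ : (Fin 3 → ℤ) →+ Bt where
  toFun v := ((v 0 : ZMod 2), (v 1 : ZMod 2), (v 2 : ZMod 4))
  map_zero' := by simp
  map_add' x y := by
    refine Prod.ext ?_ (Prod.ext ?_ ?_) <;> simp

lemma φ_surj : Function.Surjective φ := by
  rintro ⟨a, b, c⟩
  refine ⟨![(a.val : ℤ), (b.val : ℤ), (c.val : ℤ)], ?_⟩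
  show (_, _, _) = (_, _, _)
  simp [ZMod.natCast_val, ZMod.cast_id]

lemma φ_ker : φ.ker = Λ := by
  ext v
  have h : (φ v = 0) ↔ ((v 0 : ZMod 2) = 0 ∧ (v 1 : ZMod 2) = 0 ∧ (v 2 : ZMod 4) = 0) := by
    constructor
    · intro h
      exact ⟨congrArg Prod.fst h, congrArg Prod.fst (congrArg Prod.snd h),
        congrArg Prod.snd (congrArg Prod.snd h)⟩
    · rintro ⟨h1, h2, h3⟩
      show (_, _, _) = (0, 0, 0)
      rw [h1, h2, h3]
  rw [AddMonoidHom.mem_ker, h, mem_Λ_iff]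
  simp only [ZMod.intCast_zmod_eq_zero_iff_dvd]
  norm_num

noncomputable def eAB : A ≃+ Bt :=
  (QuotientAddGroup.quotientAddEquivOfEq φ_ker.symm).trans
    (QuotientAddGroup.quotientKerEquivOfSurjective φ φ_surj)

lemma eAB_mk (v : Fin 3 → ℤ) :
    eAB (QuotientAddGroup.mk v) = ((v 0 : ZMod 2), (v 1 : ZMod 2), (v 2 : ZMod 4)) := rfl

/-! ### The twelve automorphisms of `Bt` -/

def mk12 (f g : Bt → Bt) (h1 : ∀ x, g (f x) = x) (h2 : ∀ x, f (g x) = x)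
    (h3 : ∀ x y, f (x + y) = f x + f y) : AddAut Bt :=
  AddEquiv.mk' ⟨f, g, h1, h2⟩ h3

@[simp] lemma mk12_apply (f g h1 h2 h3) (x : Bt) : mk12 f g h1 h2 h3 x = f x := rfl

instance : DecidableEq (AddAut Bt) := fun f g =>
  decidable_of_iff (∀ x, f x = g x) ⟨fun h => AddEquiv.ext h, fun h x => by rw [h]⟩

def w00 : AddAut Bt :=
  mk12 (fun p => (p.1, p.2.1, p.2.2))
    (fun p => (p.1, p.2.1, p.2.2)) (by decide) (by decide) (by decide)

def w01 : AddAut Bt :=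
  mk12 (fun p => (p.1 + p.2.1 + c42 p.2.2, p.1, x24 p.1 + p.2.2))
    (fun p => (p.2.1, p.1 + p.2.1 + c42 p.2.2, x24 p.2.1 + p.2.2)) (by decide) (by decide) (by decide)

def w02 : AddAut Bt :=
  mk12 (fun p => (p.2.1, p.1 + p.2.1 + c42 p.2.2, x24 p.2.1 + 3 * p.2.2))
    (fun p => (p.1 + p.2.1 + c42 p.2.2, p.1, x24 p.1 + 3 * p.2.2)) (by decide) (by decide) (by decide)

def w03 : AddAut Bt :=
  mk12 (fun p => (p.1, p.2.1, 3 * p.2.2))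
    (fun p => (p.1, p.2.1, 3 * p.2.2)) (by decide) (by decide) (by decide)

def w04 : AddAut Bt :=
  mk12 (fun p => (p.1 + p.2.1 + c42 p.2.2, p.1, x24 p.1 + 3 * p.2.2))
    (fun p => (p.2.1, p.1 + p.2.1 + c42 p.2.2, x24 p.2.1 + 3 * p.2.2)) (by decide) (by decide) (by decide)

def w05 : AddAut Bt :=
  mk12 (fun p => (p.2.1, p.1 + p.2.1 + c42 p.2.2, x24 p.2.1 + p.2.2))
    (fun p => (p.1 + p.2.1 + c42 p.2.2, p.1, x24 p.1 + p.2.2)) (by decide) (by decide) (by decide)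

def w10 : AddAut Bt :=
  mk12 (fun p => (p.2.1, p.1, p.2.2))
    (fun p => (p.2.1, p.1, p.2.2)) (by decide) (by decide) (by decide)

def w11 : AddAut Bt :=
  mk12 (fun p => (p.1, p.1 + p.2.1 + c42 p.2.2, x24 p.1 + p.2.2))
    (fun p => (p.1, p.1 + p.2.1 + c42 p.2.2, x24 p.1 + p.2.2)) (by decide) (by decide) (by decide)

def w12 : AddAut Bt :=
  mk12 (fun p => (p.1 + p.2.1 + c42 p.2.2, p.2.1, x24 p.2.1 + 3 * p.2.2))
    (fun p => (p.1 + p.2.1 + c42 p.2.2, p.2.1, x24 p.2.1 + 3 * p.2.2)) (by decide) (by decide) (by decide)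

def w13 : AddAut Bt :=
  mk12 (fun p => (p.2.1, p.1, 3 * p.2.2))
    (fun p => (p.2.1, p.1, 3 * p.2.2)) (by decide) (by decide) (by decide)

def w14 : AddAut Bt :=
  mk12 (fun p => (p.1, p.1 + p.2.1 + c42 p.2.2, x24 p.1 + 3 * p.2.2))
    (fun p => (p.1, p.1 + p.2.1 + c42 p.2.2, x24 p.1 + 3 * p.2.2)) (by decide) (by decide) (by decide)

def w15 : AddAut Bt :=
  mk12 (fun p => (p.1 + p.2.1 + c42 p.2.2, p.2.1, x24 p.2.1 + p.2.2))
    (fun p => (p.1 + p.2.1 + c42 p.2.2, p.2.1, x24 p.2.1 + p.2.2)) (by decide) (by decide) (by decide)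

def Phif : Equiv.Perm (Fin 3) × Multiplicative (ZMod 2) → AddAut Bt := fun p =>
  if p = (1, (1 : Multiplicative (ZMod 2))) then w00
  else if p = (Equiv.swap 0 2 * Equiv.swap 0 1, Multiplicative.ofAdd (1 : ZMod 2)) then w01
  else if p = (Equiv.swap 0 1 * Equiv.swap 0 2, (1 : Multiplicative (ZMod 2))) then w02
  else if p = (1, Multiplicative.ofAdd (1 : ZMod 2)) then w03
  else if p = (Equiv.swap 0 2 * Equiv.swap 0 1, (1 : Multiplicative (ZMod 2))) then w04
  else if p = (Equiv.swap 0 1 * Equiv.swap 0 2, Multiplicative.ofAdd (1 : ZMod 2)) then w05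
  else if p = (Equiv.swap 0 1, (1 : Multiplicative (ZMod 2))) then w10
  else if p = (Equiv.swap 1 2, Multiplicative.ofAdd (1 : ZMod 2)) then w11
  else if p = (Equiv.swap 0 2, (1 : Multiplicative (ZMod 2))) then w12
  else if p = (Equiv.swap 0 1, Multiplicative.ofAdd (1 : ZMod 2)) then w13
  else if p = (Equiv.swap 1 2, (1 : Multiplicative (ZMod 2))) then w14
  else w15


theorem Phif_mul : ∀ a b, Phif (a * b) = Phif a * Phif b := by decide

theorem Phif_inj : ∀ a b, Phif a = Phif b → a = b := by decide

def Phi : Equiv.Perm (Fin 3) × Multiplicative (ZMod 2) →* AddAut Bt :=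
  MonoidHom.mk' Phif Phif_mul

def p1 : Equiv.Perm (Fin 3) × Multiplicative (ZMod 2) := (Equiv.swap 0 1, 1)
def p2 : Equiv.Perm (Fin 3) × Multiplicative (ZMod 2) :=
  (Equiv.swap 1 2, Multiplicative.ofAdd (1 : ZMod 2))
def p3 : Equiv.Perm (Fin 3) × Multiplicative (ZMod 2) :=
  (1, Multiplicative.ofAdd (1 : ZMod 2))

lemma Phi_p1 : Phi p1 = w10 := by decide
lemma Phi_p2 : Phi p2 = w11 := by decide
lemma Phi_p3 : Phi p3 = w03 := by decide

lemma closure_swaps :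
    Subgroup.closure ({Equiv.swap 0 1, Equiv.swap 1 2} : Set (Equiv.Perm (Fin 3))) = ⊤ := by
  have hA : (Equiv.swap 0 1 : Equiv.Perm (Fin 3)) ∈
      Subgroup.closure ({Equiv.swap 0 1, Equiv.swap 1 2} : Set (Equiv.Perm (Fin 3))) :=
    Subgroup.subset_closure (Set.mem_insert _ _)
  have hB : (Equiv.swap 1 2 : Equiv.Perm (Fin 3)) ∈
      Subgroup.closure ({Equiv.swap 0 1, Equiv.swap 1 2} : Set (Equiv.Perm (Fin 3))) :=
    Subgroup.subset_closure (Set.mem_insert_of_mem _ rfl)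
  have hC : (Equiv.swap 0 2 : Equiv.Perm (Fin 3)) ∈
      Subgroup.closure ({Equiv.swap 0 1, Equiv.swap 1 2} : Set (Equiv.Perm (Fin 3))) := by
    have h : (Equiv.swap 0 2 : Equiv.Perm (Fin 3)) =
        Equiv.swap 0 1 * Equiv.swap 1 2 * Equiv.swap 0 1 := by decide
    rw [h]; exact mul_mem (mul_mem hA hB) hA
  have hA' : (Equiv.swap 1 0 : Equiv.Perm (Fin 3)) ∈
      Subgroup.closure ({Equiv.swap 0 1, Equiv.swap 1 2} : Set (Equiv.Perm (Fin 3))) := by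
    rw [Equiv.swap_comm 1 0]; exact hA
  have hB' : (Equiv.swap 2 1 : Equiv.Perm (Fin 3)) ∈
      Subgroup.closure ({Equiv.swap 0 1, Equiv.swap 1 2} : Set (Equiv.Perm (Fin 3))) := by
    rw [Equiv.swap_comm 2 1]; exact hB
  have hC' : (Equiv.swap 2 0 : Equiv.Perm (Fin 3)) ∈
      Subgroup.closure ({Equiv.swap 0 1, Equiv.swap 1 2} : Set (Equiv.Perm (Fin 3))) := by
    rw [Equiv.swap_comm 2 0]; exact hC
  rw [eq_top_iff, ← Equiv.Perm.closure_isSwap]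
  refine (Subgroup.closure_le _).mpr ?_
  rintro σ ⟨x, y, hxy, rfl⟩
  fin_cases x <;> fin_cases y <;>
    first
      | exact absurd rfl hxy
      | exact hA
      | exact hB
      | exact hC
      | exact hA'
      | exact hB'
      | exact hC'

lemma closure_ps :
    Subgroup.closure ({p1, p2, p3} :
      Set (Equiv.Perm (Fin 3) × Multiplicative (ZMod 2))) = ⊤ := by
  set K := Subgroup.closure ({p1, p2, p3} :
      Set (Equiv.Perm (Fin 3) × Multiplicative (ZMod 2))) with hK
  rw [eq_top_iff]
  rintro ⟨σ, ε⟩ -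
  have hp1 : p1 ∈ K := Subgroup.subset_closure (Set.mem_insert _ _)
  have hp2 : p2 ∈ K := Subgroup.subset_closure (Set.mem_insert_of_mem _ (Set.mem_insert _ _))
  have hp3 : p3 ∈ K := Subgroup.subset_closure
    (Set.mem_insert_of_mem _ (Set.mem_insert_of_mem _ rfl))
  have h12 : ((Equiv.swap 1 2, (1 : Multiplicative (ZMod 2))) :
      Equiv.Perm (Fin 3) × Multiplicative (ZMod 2)) ∈ K := by
    have h : ((Equiv.swap 1 2, (1 : Multiplicative (ZMod 2))) :
        Equiv.Perm (Fin 3) × Multiplicative (ZMod 2)) = p2 * p3⁻¹ := by decide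
    rw [h]; exact mul_mem hp2 (inv_mem hp3)
  have hσ1 : ∀ τ : Equiv.Perm (Fin 3), ((τ, (1 : Multiplicative (ZMod 2))) :
      Equiv.Perm (Fin 3) × Multiplicative (ZMod 2)) ∈ K := by
    intro τ
    have hτ : τ ∈ Subgroup.closure ({Equiv.swap 0 1, Equiv.swap 1 2} :
        Set (Equiv.Perm (Fin 3))) := by
      rw [closure_swaps]; exact Subgroup.mem_top τ
    refine Subgroup.closure_induction ?_ ?_ ?_ ?_ hτ
    · rintro x (rfl | hx)
      · exact hp1
      · rw [Set.mem_singleton_iff] at hx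
        subst hx
        exact h12
    · exact one_mem K
    · intro x y _ _ ihx ihy
      have h : ((x * y, (1 : Multiplicative (ZMod 2))) :
          Equiv.Perm (Fin 3) × Multiplicative (ZMod 2)) = (x, 1) * (y, 1) := by
        rw [Prod.mk_mul_mk, mul_one]
      rw [h]; exact mul_mem ihx ihy
    · intro x _ ihx
      have h : ((x⁻¹, (1 : Multiplicative (ZMod 2))) :
          Equiv.Perm (Fin 3) × Multiplicative (ZMod 2)) = (x, 1)⁻¹ := by
        rw [Prod.inv_mk, inv_one]
      rw [h]; exact inv_mem ihx
  have hε : (((1 : Equiv.Perm (Fin 3)), ε) :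
      Equiv.Perm (Fin 3) × Multiplicative (ZMod 2)) ∈ K := by
    rcases (by decide : ∀ ε : Multiplicative (ZMod 2),
        ε = 1 ∨ ε = Multiplicative.ofAdd (1 : ZMod 2)) ε with h | h
    · rw [h]; exact one_mem K
    · rw [h]; exact hp3
  have h : ((σ, ε) : Equiv.Perm (Fin 3) × Multiplicative (ZMod 2)) = (σ, 1) * (1, ε) := by
    rw [Prod.mk_mul_mk, mul_one, one_mul]
  rw [h]; exact mul_mem (hσ1 σ) hε

lemma range_eq : Phi.range = Subgroup.closure ({w10, w11, w03} : Set (AddAut Bt)) := by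
  rw [MonoidHom.range_eq_map, ← closure_ps, MonoidHom.map_closure]
  congr 1
  rw [Set.image_insert_eq, Set.image_insert_eq, Set.image_singleton, Phi_p1, Phi_p2, Phi_p3]

noncomputable def isoB : (Subgroup.closure ({w10, w11, w03} : Set (AddAut Bt))) ≃*
    Equiv.Perm (Fin 3) × Multiplicative (ZMod 2) :=
  (MulEquiv.subgroupCongr range_eq.symm).trans
    (MonoidHom.ofInjective (f := Phi) (fun a b => Phif_inj a b)).symm

/-! ### mulVec computations and compatibility -/

lemma mulVec_g1 (v : Fin 3 → ℤ) : g1.mulVec v = ![-(v 1), -(v 0), v 2] := by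
  funext i
  fin_cases i <;>
    simp [g1, Matrix.mulVec, dotProduct, Fin.sum_univ_three]

lemma mulVec_M2 (v : Fin 3 → ℤ) : M2m.mulVec v = ![v 0, v 0 + v 1 + v 2, 2 * v 0 + v 2] := by
  funext i
  fin_cases i <;>
    simp [M2m, Matrix.mulVec, dotProduct, Fin.sum_univ_three]

lemma mulVec_g3 (v : Fin 3 → ℤ) : g3.mulVec v = -v := by
  rw [g3, Matrix.neg_mulVec, Matrix.one_mulVec]

lemma cp1 (v : Fin 3 → ℤ) :
    w10 (eAB (QuotientAddGroup.mk v)) = eAB (QuotientAddGroup.mk (g1.mulVec v)) := by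
  rw [mulVec_g1, eAB_mk]
  show ((v 1 : ZMod 2), (v 0 : ZMod 2), (v 2 : ZMod 4)) = _
  rw [eAB_mk]
  refine Prod.ext ?_ (Prod.ext ?_ ?_) <;>
    simp [CharTwo.neg_eq]

lemma cp2 (v : Fin 3 → ℤ) :
    w11 (eAB (QuotientAddGroup.mk v)) = eAB (QuotientAddGroup.mk (M2m.mulVec v)) := by
  rw [mulVec_M2, eAB_mk]
  show ((v 0 : ZMod 2), (v 0 : ZMod 2) + (v 1 : ZMod 2) + c42 (v 2 : ZMod 4),
      x24 (v 0 : ZMod 2) + (v 2 : ZMod 4)) = _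
  rw [eAB_mk]
  refine Prod.ext ?_ (Prod.ext ?_ ?_)
  · simp
  · rw [lemA]
    show _ = ((v 0 + v 1 + v 2 : ℤ) : ZMod 2)
    push_cast
    ring
  · rw [lemB]
    show _ = ((2 * v 0 + v 2 : ℤ) : ZMod 4)
    push_cast
    ring

lemma cp3 (v : Fin 3 → ℤ) :
    w03 (eAB (QuotientAddGroup.mk v)) = eAB (QuotientAddGroup.mk (g3.mulVec v)) := by
  rw [mulVec_g3, eAB_mk]
  show ((v 0 : ZMod 2), (v 1 : ZMod 2), 3 * (v 2 : ZMod 4)) = _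
  rw [eAB_mk]
  refine Prod.ext ?_ (Prod.ext ?_ ?_) <;>
    simp only [Pi.neg_apply, Int.cast_neg]
  · rw [CharTwo.neg_eq]
  · rw [CharTwo.neg_eq]
  · rw [show (3 : ZMod 4) = -1 by decide]
    ring

/-! ### The automorphisms of `A` and the conjugation isomorphism -/

noncomputable def hh1 : AddAut A := eAB.trans (AddEquiv.trans w10 eAB.symm)
noncomputable def hh2 : AddAut A := eAB.trans (AddEquiv.trans w11 eAB.symm)
noncomputable def hh3 : AddAut A := eAB.trans (AddEquiv.trans w03 eAB.symm)

lemma hh1_mk (v : Fin 3 → ℤ) :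
    hh1 (QuotientAddGroup.mk v) = QuotientAddGroup.mk (g1.mulVec v) := by
  show eAB.symm (w10 (eAB _)) = _
  rw [cp1, AddEquiv.symm_apply_apply]

lemma hh2_mk (v : Fin 3 → ℤ) :
    hh2 (QuotientAddGroup.mk v) = QuotientAddGroup.mk (M2m.mulVec v) := by
  show eAB.symm (w11 (eAB _)) = _
  rw [cp2, AddEquiv.symm_apply_apply]

lemma hh3_mk (v : Fin 3 → ℤ) :
    hh3 (QuotientAddGroup.mk v) = QuotientAddGroup.mk (g3.mulVec v) := by
  show eAB.symm (w03 (eAB _)) = _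
  rw [cp3, AddEquiv.symm_apply_apply]

noncomputable def acongr : AddAut A ≃* AddAut Bt where
  toFun g := AddEquiv.trans eAB.symm (AddEquiv.trans g eAB)
  invFun g := AddEquiv.trans eAB (AddEquiv.trans g eAB.symm)
  left_inv g := by
    apply AddEquiv.ext
    intro x
    show eAB.symm ((eAB.symm.trans (AddEquiv.trans g eAB)) (eAB x)) = g x
    rw [AddEquiv.trans_apply, AddEquiv.trans_apply, AddEquiv.symm_apply_apply,
      AddEquiv.symm_apply_apply]
  right_inv g := by
    apply AddEquiv.ext
    intro x
    show eAB ((eAB.trans (AddEquiv.trans g eAB.symm)) (eAB.symm x)) = g x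
    rw [AddEquiv.trans_apply, AddEquiv.trans_apply, AddEquiv.apply_symm_apply,
      AddEquiv.apply_symm_apply]
  map_mul' g h := by
    apply AddEquiv.ext
    intro x
    show eAB ((g * h) (eAB.symm x)) = eAB (g (eAB.symm (eAB (h (eAB.symm x)))))
    rw [AddEquiv.symm_apply_apply]
    rfl

lemma acongr_apply (g : AddAut A) (x : Bt) : acongr g x = eAB (g (eAB.symm x)) := rfl

lemma acongr_h1 : acongr hh1 = w10 := by
  apply AddEquiv.ext
  intro x
  rw [acongr_apply]
  show eAB ((eAB.trans (AddEquiv.trans w10 eAB.symm)) (eAB.symm x)) = w10 x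
  rw [AddEquiv.trans_apply, AddEquiv.trans_apply, AddEquiv.apply_symm_apply,
    AddEquiv.apply_symm_apply]

lemma acongr_h2 : acongr hh2 = w11 := by
  apply AddEquiv.ext
  intro x
  rw [acongr_apply]
  show eAB ((eAB.trans (AddEquiv.trans w11 eAB.symm)) (eAB.symm x)) = w11 x
  rw [AddEquiv.trans_apply, AddEquiv.trans_apply, AddEquiv.apply_symm_apply,
    AddEquiv.apply_symm_apply]

lemma acongr_h3 : acongr hh3 = w03 := by
  apply AddEquiv.ext
  intro x
  rw [acongr_apply]
  show eAB ((eAB.trans (AddEquiv.trans w03 eAB.symm)) (eAB.symm x)) = w03 x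
  rw [AddEquiv.trans_apply, AddEquiv.trans_apply, AddEquiv.apply_symm_apply,
    AddEquiv.apply_symm_apply]

lemma mapeq : (Subgroup.closure ({hh1, hh2, hh3} : Set (AddAut A))).map
      (acongr : AddAut A →* AddAut Bt)
    = Subgroup.closure ({w10, w11, w03} : Set (AddAut Bt)) := by
  rw [MonoidHom.map_closure]
  congr 1
  rw [show (⇑(acongr : AddAut A →* AddAut Bt)) = ⇑acongr from rfl]
  rw [Set.image_insert_eq, Set.image_insert_eq, Set.image_singleton,
    acongr_h1, acongr_h2, acongr_h3]

noncomputable def isoA : (Subgroup.closure ({hh1, hh2, hh3} : Set (AddAut A))) ≃*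
    Equiv.Perm (Fin 3) × Multiplicative (ZMod 2) :=
  ((acongr.subgroupMap _).trans (MulEquiv.subgroupCongr mapeq)).trans isoB

lemma card12 :
    Nat.card (Subgroup.closure ({hh1, hh2, hh3} : Set (AddAut A))) = 12 := by
  rw [Nat.card_congr isoA.toEquiv]
  rw [Nat.card_eq_fintype_card, Fintype.card_prod, Fintype.card_perm, Fintype.card_fin]
  norm_num [Fintype.card_multiplicative, ZMod.card]

/-! ### Main statement -/

theorem statement0 :
    (g1ᵀ * Q * g1 = Q ∧ g2ᵀ * Q * g2 = Q ∧ g3ᵀ * Q * g3 = Q) ∧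
    Nonempty (A ≃+ ZMod 2 × ZMod 2 × ZMod 4) ∧
    ∃ M1 M2 M3 : Matrix (Fin 3) (Fin 3) ℤ,
      -- `Mᵢ` is the (integral) matrix `D·gᵢ·D⁻¹`
      M1 * D = D * g1 ∧ M2 * D = D * g2 ∧ M3 * D = D * g3 ∧
      -- each `D·gᵢ·D⁻¹` carries `Λ` into itself
      (∀ v ∈ Λ, M1.mulVec v ∈ Λ) ∧
      (∀ v ∈ Λ, M2.mulVec v ∈ Λ) ∧
      (∀ v ∈ Λ, M3.mulVec v ∈ Λ) ∧
      -- hence induces automorphisms `hᵢ` of `A`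
      ∃ h1 h2 h3 : AddAut A,
        (∀ v : Fin 3 → ℤ,
            h1 (QuotientAddGroup.mk v) = QuotientAddGroup.mk (M1.mulVec v)) ∧
        (∀ v : Fin 3 → ℤ,
            h2 (QuotientAddGroup.mk v) = QuotientAddGroup.mk (M2.mulVec v)) ∧
        (∀ v : Fin 3 → ℤ,
            h3 (QuotientAddGroup.mk v) = QuotientAddGroup.mk (M3.mulVec v)) ∧
        -- the subgroup generated by `h₁, h₂, h₃` is isomorphic to `S₃ × ℤ/2ℤ`
        Nonempty ((Subgroup.closure {Multiplicative.ofAdd h1, Multiplicative.ofAdd h2,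
            Multiplicative.ofAdd h3} : Subgroup (Multiplicative (AddAut A))) ≃*
            Equiv.Perm (Fin 3) × Multiplicative (ZMod 2)) ∧
        -- in particular it has order 12
        Nat.card (Subgroup.closure {Multiplicative.ofAdd h1, Multiplicative.ofAdd h2,
            Multiplicative.ofAdd h3} : Subgroup (Multiplicative (AddAut A))) = 12 := by
  refine ⟨⟨by decide, by decide, by decide⟩, ⟨eAB⟩, g1, M2m, g3,
    by decide, by decide, by decide, ?_, ?_, ?_,
    hh1, hh2, hh3, hh1_mk, hh2_mk, hh3_mk, ⟨isoA⟩, card12⟩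
  · intro v hv
    rw [mem_Λ_iff] at hv
    obtain ⟨d1, d2, d3⟩ := hv
    rw [mulVec_g1, mem_Λ_iff]
    refine ⟨?_, ?_, ?_⟩
    · show (2:ℤ) ∣ -(v 1); omega
    · show (2:ℤ) ∣ -(v 0); omega
    · show (4:ℤ) ∣ v 2; omega
  · intro v hv
    rw [mem_Λ_iff] at hv
    obtain ⟨d1, d2, d3⟩ := hv
    rw [mulVec_M2, mem_Λ_iff]
    refine ⟨?_, ?_, ?_⟩
    · show (2:ℤ) ∣ v 0; omega
    · show (2:ℤ) ∣ v 0 + v 1 + v 2; omega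
    · show (4:ℤ) ∣ 2 * v 0 + v 2; omega
  · intro v hv
    rw [mem_Λ_iff] at hv
    obtain ⟨d1, d2, d3⟩ := hv
    rw [mulVec_g3, mem_Λ_iff]
    refine ⟨?_, ?_, ?_⟩
    · show (2:ℤ) ∣ -(v 0); omega
    · show (2:ℤ) ∣ -(v 1); omega
    · show (4:ℤ) ∣ -(v 2); omega

end Stmt0
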